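/- Let G be a connected reductive algebraic group over an algebraically closed field K, let (ρ,V) be a finite-dimensional linear representation of G, let W ⊆ V be a d-dimensional subspace with basis w₁,…,w_d, let X = ⊕^d V with the diagonal G-action, let x = (w₁,…,w_d) ∈ X, suppose the orbit ρ(G)x is not closed, and let S = closure(ρ(G)x) ∖ ρ(G)x. Let h ∈ G satisfy ρ(h)W = W and set x' = ρ(h)x. Then |X,x| = |X,x'|, and α_{S,x}(λ) = α_{S,x'}(λ) for every λ ∈ |X,x|. -/
import Mathlib


/-- An axiomatization of a connected reductive linear algebraic group `G` over the
algebraically closed field `K`, recording which abstract homomorphisms `𝔾_m = Kˣ → G` are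
(algebraic) cocharacters. -/
structure ConnectedReductiveGroup (K : Type*) [Field K] [IsAlgClosed K] where
  /-- the group of `K`-points of `G` -/
  G : Type*
  [grp : Group G]
  /-- `IsCochar γ`: the homomorphism `γ : Kˣ → G` is an algebraic cocharacter `𝔾_m → G` -/
  IsCochar : (Kˣ →* G) → Prop

attribute [instance] ConnectedReductiveGroup.grp

section WeightTheory

variable {K : Type*} [Field K] {V : Type*} [AddCommGroup V] [Module K V]
variable {G : Type*} [Group G]

/-- The weight space `V(λ;i) = {v ∈ V ∣ ρ(λ(t))v = tⁱ v for all t}` of the cocharacter `λ`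
acting via the representation `ρ`. -/
def wtSpace (ρ : G →* V ≃ₗ[K] V) (l : Kˣ →* G) (i : ℤ) : Submodule K V where
  carrier := {v | ∀ t : Kˣ, ρ (l t) v = ((t ^ i : Kˣ) : K) • v}
  add_mem' := by
    intro a b ha hb t
    rw [map_add, ha t, hb t, smul_add]
  zero_mem' := by
    intro t
    rw [map_zero, smul_zero]
  smul_mem' := by
    intro c a ha t
    rw [map_smul, ha t, smul_comm]

/-- `λ ∈ |V,v|`: the limit `lim_{t→0} ρ(λ(t))v` exists, i.e. `v` lies in the sum of the
nonnegative weight spaces of `λ`. -/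
def limitExists (ρ : G →* V ≃ₗ[K] V) (l : Kˣ →* G) (v : V) : Prop :=
  v ∈ ⨆ i : ℕ, wtSpace ρ l (i : ℤ)

/-- The component `v_i ∈ V(λ;i)` of `v` in the weight space decomposition
`V = ⊕_{i ∈ ℤ} V(λ;i)`.  (For an algebraic representation this decomposition is internal;
this is recorded by the hypothesis `hdec`.)  When the limit `lim_{t→0} ρ(λ(t))v` exists, it
equals the component `v₀ = wtComponent ρ l hdec v 0`. -/
noncomputable def wtComponent (ρ : G →* V ≃ₗ[K] V) (l : Kˣ →* G)
    (hdec : DirectSum.IsInternal fun i : ℤ => wtSpace ρ l i) (v : V) (i : ℤ) : V :=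
  ((Equiv.ofBijective _ hdec).symm v i : V)

open scoped Classical in
/-- The Kempf instability degree `α_{S,v}(λ)` of `v ∉ S` relative to a closed `G`-invariant
subvariety `S`: writing `v₀ = lim_{t→0} ρ(λ(t))v` (the weight-`0` component of `v`), it is
the order of vanishing `min {j > 0 ∣ v_j ≠ 0}` of `t ↦ ρ(λ(t))v - v₀` if `v₀ ∈ S`, and `0`
otherwise. -/
noncomputable def kempfAlpha (ρ : G →* V ≃ₗ[K] V) (l : Kˣ →* G)
    (hdec : DirectSum.IsInternal fun i : ℤ => wtSpace ρ l i) (S : Set V) (v : V) : ℕ∞ :=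
  if wtComponent ρ l hdec v 0 ∈ S then
    ⨅ n ∈ {n : ℕ | 0 < n ∧ wtComponent ρ l hdec v (n : ℤ) ≠ 0}, (n : ℕ∞)
  else 0

/-- The diagonal representation of `G` on `⊕^d V = (Fin d → V)`. -/
def diagRep (d : ℕ) (ρ : G →* V ≃ₗ[K] V) : G →* ((Fin d → V) ≃ₗ[K] (Fin d → V)) where
  toFun g := LinearEquiv.piCongrRight fun _ : Fin d => ρ g
  map_one' := by
    apply LinearEquiv.ext
    intro x
    funext i
    show (ρ 1) (x i) = x i
    rw [map_one]
    rfl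
  map_mul' g h := by
    apply LinearEquiv.ext
    intro x
    funext i
    simp only [map_mul]
    rfl

end WeightTheory

/-- A function `f : V → K` is a polynomial (regular) function on the `K`-vector space `V`:
it lies in the `K`-subalgebra of `V → K` generated by the linear functionals. -/
def IsPolyFun (K : Type*) [CommRing K] {V : Type*} [AddCommGroup V] [Module K V]
    (f : V → K) : Prop :=
  f ∈ Algebra.adjoin K (Set.range fun φ : Module.Dual K V => (φ : V → K))

/-- A subset of the `K`-vector space `V` is Zariski closed if it is the common zero locus of a
family of polynomial functions on `V`. -/
def IsZariskiClosed (K : Type*) [CommRing K] {V : Type*} [AddCommGroup V] [Module K V]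
    (S : Set V) : Prop :=
  ∃ T : Set (V → K), (∀ f ∈ T, IsPolyFun K f) ∧ S = {v | ∀ f ∈ T, f v = 0}

/-- The Zariski closure of a subset of the `K`-vector space `V`: the common zero locus of all
polynomial functions vanishing on the subset. -/
def zariskiClosure (K : Type*) [CommRing K] {V : Type*} [AddCommGroup V] [Module K V]
    (A : Set V) : Set V :=
  {v | ∀ f : V → K, IsPolyFun K f → (∀ a ∈ A, f a = 0) → f v = 0}

section AuxMix

open scoped DirectSum

variable {K : Type*} [Field K] {V : Type*} [AddCommGroup V] [Module K V]
variable {G : Type*} [Group G]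

/-- Mixing the coordinates of `⊕^d V` by a scalar matrix `c`. -/
def mixMap {d : ℕ} (c : Fin d → Fin d → K) : (Fin d → V) →ₗ[K] (Fin d → V) where
  toFun v := fun j => ∑ i, c j i • v i
  map_add' a b := by
    funext j
    simp [smul_add, Finset.sum_add_distrib]
  map_smul' r v := by
    funext j
    simp only [RingHom.id_apply, Pi.smul_apply, Finset.smul_sum]
    exact Finset.sum_congr rfl fun i _ => (smul_comm r (c j i) (v i)).symm

@[simp] lemma mixMap_apply {d : ℕ} (c : Fin d → Fin d → K) (v : Fin d → V) (j : Fin d) :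
    mixMap c v j = ∑ i, c j i • v i := rfl

lemma diagRep_apply {d : ℕ} (ρ : G →* V ≃ₗ[K] V) (g : G) (v : Fin d → V) (j : Fin d) :
    diagRep d ρ g v j = ρ g (v j) := rfl

lemma mixMap_comm {d : ℕ} (ρ : G →* V ≃ₗ[K] V) (g : G) (c : Fin d → Fin d → K)
    (v : Fin d → V) :
    diagRep d ρ g (mixMap c v) = mixMap c (diagRep d ρ g v) := by
  funext j
  rw [diagRep_apply, mixMap_apply, mixMap_apply, map_sum]
  exact Finset.sum_congr rfl fun i _ => by rw [map_smul, diagRep_apply]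

lemma mixMap_mem_wtSpace {d : ℕ} (ρ : G →* V ≃ₗ[K] V) (l : Kˣ →* G)
    (c : Fin d → Fin d → K) {i : ℤ} {v : Fin d → V}
    (hv : v ∈ wtSpace (diagRep d ρ) l i) :
    mixMap c v ∈ wtSpace (diagRep d ρ) l i := by
  intro t
  rw [mixMap_comm, hv t, map_smul]

lemma limitExists_mixMap {d : ℕ} (ρ : G →* V ≃ₗ[K] V) (l : Kˣ →* G)
    (c : Fin d → Fin d → K) {v : Fin d → V}
    (hv : limitExists (diagRep d ρ) l v) :
    limitExists (diagRep d ρ) l (mixMap c v) := by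
  have h1 : mixMap c v ∈
      Submodule.map (mixMap c) (⨆ i : ℕ, wtSpace (diagRep d ρ) l (i : ℤ)) :=
    ⟨v, hv, rfl⟩
  rw [Submodule.map_iSup] at h1
  have h2 : (⨆ i : ℕ, Submodule.map (mixMap c) (wtSpace (diagRep d ρ) l (i : ℤ))) ≤
      ⨆ i : ℕ, wtSpace (diagRep d ρ) l (i : ℤ) := by
    refine iSup_le fun i => le_trans ?_ (le_iSup _ i)
    rintro x ⟨y, hy, rfl⟩
    exact mixMap_mem_wtSpace ρ l c hy
  exact h2 h1

lemma wtComponent_spec (ρ : G →* V ≃ₗ[K] V) (l : Kˣ →* G)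
    (hdec : DirectSum.IsInternal fun i : ℤ => wtSpace ρ l i) (v : V)
    (u : ⨁ (i : ℤ), wtSpace ρ l i)
    (hu : DirectSum.coeAddMonoidHom (fun i : ℤ => wtSpace ρ l i) u = v) (i : ℤ) :
    wtComponent ρ l hdec v i = u i := by
  have h1 : (Equiv.ofBijective _ hdec).symm v = u := by
    apply (Equiv.ofBijective _ hdec).injective
    rw [Equiv.apply_symm_apply]
    exact hu.symm
  rw [wtComponent, h1]

set_option maxHeartbeats 2000000 in
set_option synthInstance.maxHeartbeats 1000000 in
lemma component_map {K : Type*} [Field K] {N : Type*} [AddCommGroup N] [Module K N]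
    (A : ℤ → Submodule K N) (hdec : DirectSum.IsInternal A)
    (L : N →ₗ[K] N) (hL : ∀ i : ℤ, ∀ x ∈ A i, L x ∈ A i) (v : N) (i : ℤ) :
    ((Equiv.ofBijective _ hdec).symm (L v) i : N) =
      L ((Equiv.ofBijective _ hdec).symm v i : N) := by
  classical
  let F : (⨁ (j : ℤ), A j) →+ (⨁ (j : ℤ), A j) :=
    DFinsupp.mapRange.addMonoidHom fun j => (L.restrict (hL j)).toAddMonoidHom
  have hof : ∀ (j : ℤ) (x : A j), F (DirectSum.of (fun k => A k) j x) =
      DirectSum.of (fun k => A k) j (L.restrict (hL j) x) := by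
    intro j x
    simp only [F, DFinsupp.mapRange.addMonoidHom_apply, DirectSum.of,
      DFinsupp.singleAddHom_apply]
    exact DFinsupp.mapRange_single (hf := fun i => map_zero _)
  have hF : ∀ z : ⨁ (j : ℤ), A j,
      DirectSum.coeAddMonoidHom A (F z) = L (DirectSum.coeAddMonoidHom A z) := by
    intro z
    induction z using DirectSum.induction_on with
    | zero => simp
    | of j x =>
        rw [hof j x, DirectSum.coeAddMonoidHom_of, DirectSum.coeAddMonoidHom_of]
        rfl
    | add a b ha hb => simp [map_add, ha, hb]
  have hcoe : ∀ z : N, DirectSum.coeAddMonoidHom A ((Equiv.ofBijective _ hdec).symm z) = z :=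
    fun z => (Equiv.ofBijective _ hdec).apply_symm_apply z
  have key : (Equiv.ofBijective _ hdec).symm (L v) =
      F ((Equiv.ofBijective _ hdec).symm v) := by
    apply hdec.injective
    show DirectSum.coeAddMonoidHom A _ = DirectSum.coeAddMonoidHom A _
    rw [hF, hcoe, hcoe]
  rw [key]
  show ((F ((Equiv.ofBijective _ hdec).symm v)) i : N) = _
  simp only [F, DFinsupp.mapRange.addMonoidHom_apply, DFinsupp.mapRange_apply]
  rfl

lemma wtComponent_mixMap {d : ℕ} (ρ : G →* V ≃ₗ[K] V) (l : Kˣ →* G)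
    (hdec : DirectSum.IsInternal fun i : ℤ => wtSpace (diagRep d ρ) l i)
    (c : Fin d → Fin d → K) (v : Fin d → V) (i : ℤ) :
    wtComponent (diagRep d ρ) l hdec (mixMap c v) i =
      mixMap c (wtComponent (diagRep d ρ) l hdec v i) :=
  component_map (fun i : ℤ => wtSpace (diagRep d ρ) l i) hdec (mixMap c)
    (fun _ _ hx => mixMap_mem_wtSpace ρ l c hx) v i

lemma isPolyFun_comp {K : Type*} [Field K] {V W : Type*} [AddCommGroup V] [Module K V]
    [AddCommGroup W] [Module K W] (L : V →ₗ[K] W) {f : W → K} (hf : IsPolyFun K f) :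
    IsPolyFun K (f ∘ L) := by
  unfold IsPolyFun at *
  induction hf using Algebra.adjoin_induction with
  | mem φ hφ =>
      obtain ⟨ψ, rfl⟩ := hφ
      exact Algebra.subset_adjoin ⟨ψ.comp L, rfl⟩
  | algebraMap r => exact Subalgebra.algebraMap_mem _ r
  | add f g _ _ hf hg => exact Subalgebra.add_mem _ hf hg
  | mul f g _ _ hf hg => exact Subalgebra.mul_mem _ hf hg

lemma subset_zariskiClosure {K : Type*} [Field K] {V : Type*} [AddCommGroup V]
    [Module K V] {A : Set V} {a : V} (ha : a ∈ A) : a ∈ zariskiClosure K A :=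
  fun _ _ hf => hf a ha

lemma mem_zariskiClosure_map {K : Type*} [Field K] {V : Type*} [AddCommGroup V]
    [Module K V] (L : V →ₗ[K] V) {A B : Set V}
    (h : ∀ a ∈ A, L a ∈ zariskiClosure K B) {v : V} (hv : v ∈ zariskiClosure K A) :
    L v ∈ zariskiClosure K B := by
  intro f hf hfB
  exact hv (f ∘ L) (isPolyFun_comp L hf) fun a ha => h a ha f hf hfB

end AuxMix

/-- **Corollary (different-bases)**: let `W ⊆ V` be a `d`-dimensional subspace with basis
`w₁, …, w_d`, let `x = (w₁, …, w_d) ∈ X = ⊕^d V`, suppose the orbit `ρ(G)x` is not closed,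
and let `S = closure(ρ(G)x) ∖ ρ(G)x`.  If `h ∈ G` satisfies `ρ(h)W = W` and `x' = ρ(h)x`,
then `|X,x| = |X,x'|` and `α_{S,x}(λ) = α_{S,x'}(λ)` for every `λ ∈ |X,x|`. -/
theorem limitExists_eq_and_kempfAlpha_eq_of_mapsTo
    {K : Type*} [Field K] [IsAlgClosed K] (R : ConnectedReductiveGroup K)
    {V : Type*} [AddCommGroup V] [Module K V] [FiniteDimensional K V]
    (ρ : R.G →* V ≃ₗ[K] V) {d : ℕ} (W : Submodule K V) (w : Fin d → V)
    (hw_indep : LinearIndependent K w)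
    (hw_span : Submodule.span K (Set.range w) = W)
    (hdecAll : ∀ l : Kˣ →* R.G, R.IsCochar l →
      DirectSum.IsInternal fun i : ℤ => wtSpace (diagRep d ρ) l i)
    (hnot_closed :
      zariskiClosure K (Set.range fun g : R.G => diagRep d ρ g w) ≠
        Set.range fun g : R.G => diagRep d ρ g w)
    (h : R.G) (hhW : Submodule.map (ρ h : V →ₗ[K] V) W = W) :
    ({l : Kˣ →* R.G | R.IsCochar l ∧ limitExists (diagRep d ρ) l w} =
      {l : Kˣ →* R.G | R.IsCochar l ∧ limitExists (diagRep d ρ) l (diagRep d ρ h w)}) ∧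
    ∀ (l : Kˣ →* R.G) (hl : R.IsCochar l), limitExists (diagRep d ρ) l w →
      kempfAlpha (diagRep d ρ) l (hdecAll l hl)
          ((zariskiClosure K (Set.range fun g : R.G => diagRep d ρ g w)) \
            (Set.range fun g : R.G => diagRep d ρ g w)) w =
        kempfAlpha (diagRep d ρ) l (hdecAll l hl)
          ((zariskiClosure K (Set.range fun g : R.G => diagRep d ρ g w)) \
            (Set.range fun g : R.G => diagRep d ρ g w)) (diagRep d ρ h w) := by
  classical
  have hWmem : ∀ j, w j ∈ W := by
    intro j; rw [← hw_span]; exact Submodule.subset_span ⟨j, rfl⟩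
  have hmem1 : ∀ j, ρ h (w j) ∈ Submodule.span K (Set.range w) := by
    intro j
    rw [hw_span, ← hhW]
    exact Submodule.mem_map_of_mem (hWmem j)
  have hmem2 : ∀ j, (ρ h).symm (w j) ∈ Submodule.span K (Set.range w) := by
    intro j
    rw [hw_span]
    have h1 : w j ∈ Submodule.map (ρ h : V →ₗ[K] V) W := by rw [hhW]; exact hWmem j
    obtain ⟨u, hu, huw⟩ := h1
    have h2 : (ρ h).symm (w j) = u := by
      rw [← huw]; exact (ρ h).symm_apply_apply u
    rwa [h2]
  choose c hc using fun j => (Submodule.mem_span_range_iff_exists_fun K).mp (hmem1 j)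
  choose c' hc' using fun j => (Submodule.mem_span_range_iff_exists_fun K).mp (hmem2 j)
  have hBw : mixMap c w = diagRep d ρ h w := by
    funext j
    rw [mixMap_apply, hc j, diagRep_apply]
  have hB'w' : mixMap c' (diagRep d ρ h w) = w := by
    funext j
    rw [mixMap_apply]
    have hsm : ∀ i, c' j i • diagRep d ρ h w i = ρ h (c' j i • w i) := by
      intro i; rw [diagRep_apply, map_smul]
    rw [Finset.sum_congr rfl fun i _ => hsm i, ← map_sum, hc' j,
      LinearEquiv.apply_symm_apply]
  set Orb : Set (Fin d → V) := Set.range fun g : R.G => diagRep d ρ g w with hOrb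
  have hmul : ∀ (a b : R.G) (v : Fin d → V),
      diagRep d ρ (a * b) v = diagRep d ρ a (diagRep d ρ b v) := by
    intro a b v; rw [map_mul]; rfl
  have hBorb : ∀ v ∈ Orb, mixMap c v ∈ Orb := by
    rintro v ⟨g, rfl⟩
    refine ⟨g * h, ?_⟩
    show diagRep d ρ (g * h) w = mixMap c (diagRep d ρ g w)
    rw [hmul, ← hBw]
    exact mixMap_comm ρ g c w
  have hB'orb : ∀ v ∈ Orb, mixMap c' v ∈ Orb := by
    rintro v ⟨g, rfl⟩
    refine ⟨g * h⁻¹, ?_⟩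
    show diagRep d ρ (g * h⁻¹) w = mixMap c' (diagRep d ρ g w)
    have h2 : diagRep d ρ g w = diagRep d ρ (g * h⁻¹) (diagRep d ρ h w) := by
      rw [← hmul, inv_mul_cancel_right]
    rw [h2, ← mixMap_comm, hB'w']
  have keyS : ∀ (M M' : (Fin d → V) →ₗ[K] (Fin d → V)), (∀ u ∈ Orb, M u ∈ Orb) →
      (∀ u ∈ Orb, M' u ∈ Orb) → ∀ v : Fin d → V, M' (M v) = v →
      v ∈ zariskiClosure K Orb \ Orb → M v ∈ zariskiClosure K Orb \ Orb := by
    rintro M M' hM hM' v hinv ⟨h1, h2⟩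
    constructor
    · exact mem_zariskiClosure_map M (fun a ha => subset_zariskiClosure (hM a ha)) h1
    · intro hmem
      have h3 := hM' _ hmem
      rw [hinv] at h3
      exact h2 h3
  constructor
  · ext l
    simp only [Set.mem_setOf_eq]
    refine and_congr_right fun hl => ⟨fun hlim => ?_, fun hlim => ?_⟩
    · rw [← hBw]
      exact limitExists_mixMap ρ l c hlim
    · rw [← hB'w']
      exact limitExists_mixMap ρ l c' hlim
  · intro l hl hlim
    have hcomp : ∀ i : ℤ, wtComponent (diagRep d ρ) l (hdecAll l hl) (diagRep d ρ h w) i =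
        mixMap c (wtComponent (diagRep d ρ) l (hdecAll l hl) w i) := by
      intro i; rw [← hBw, wtComponent_mixMap]
    have hcomp' : ∀ i : ℤ, wtComponent (diagRep d ρ) l (hdecAll l hl) w i =
        mixMap c' (wtComponent (diagRep d ρ) l (hdecAll l hl) (diagRep d ρ h w) i) := by
      intro i
      conv_lhs => rw [← hB'w']
      rw [wtComponent_mixMap]
    have hinv1 : mixMap c' (mixMap c (wtComponent (diagRep d ρ) l (hdecAll l hl) w 0)) =
        wtComponent (diagRep d ρ) l (hdecAll l hl) w 0 := by
      rw [← hcomp 0]; exact (hcomp' 0).symm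
    have hinv2 : mixMap c (mixMap c'
          (wtComponent (diagRep d ρ) l (hdecAll l hl) (diagRep d ρ h w) 0)) =
        wtComponent (diagRep d ρ) l (hdecAll l hl) (diagRep d ρ h w) 0 := by
      rw [← hcomp' 0]; exact (hcomp 0).symm
    have hS0 : (wtComponent (diagRep d ρ) l (hdecAll l hl) w 0 ∈
          zariskiClosure K Orb \ Orb) ↔
        (wtComponent (diagRep d ρ) l (hdecAll l hl) (diagRep d ρ h w) 0 ∈
          zariskiClosure K Orb \ Orb) := by
      constructor
      · intro hx
        rw [hcomp 0]
        exact keyS (mixMap c) (mixMap c') hBorb hB'orb _ hinv1 hx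
      · intro hx
        rw [hcomp' 0]
        exact keyS (mixMap c') (mixMap c) hB'orb hBorb _ hinv2 hx
    have hsets : {n : ℕ | 0 < n ∧
          wtComponent (diagRep d ρ) l (hdecAll l hl) w (n : ℤ) ≠ 0} =
        {n : ℕ | 0 < n ∧
          wtComponent (diagRep d ρ) l (hdecAll l hl) (diagRep d ρ h w) (n : ℤ) ≠ 0} := by
      ext n
      simp only [Set.mem_setOf_eq, and_congr_right_iff]
      intro _
      constructor
      · intro hne h0; exact hne (by rw [hcomp' (n : ℤ), h0, map_zero])
      · intro hne h0; exact hne (by rw [hcomp (n : ℤ), h0, map_zero])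
    simp only [kempfAlpha, hsets, hS0]
    congr
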